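/- arXiv:2605.05568 — 3 statements merged into one kernel-verified Lean document; each statement's English description precedes it below -/
import Mathlib

section
/- Under the no-cancellation condition, the support of Ω = (I−B)^T D^{-1} (I−B) (off-diagonal) equals exactly the edge set of the moralized graph of the DAG encoded by B: for j < k, Ω_{kj} ≠ 0 if and only if B_{kj} ≠ 0 or there exists ℓ > k with B_{ℓj} B_{ℓk} ≠ 0. -/
open Matrix

/-- Under no-cancellation, the off-diagonal support of `Ω = (I−B)ᵀ D⁻¹ (I−B)` equals
exactly the moralized skeleton: for `j < k`, `Ω_{kj} ≠ 0` iff `B_{kj} ≠ 0` or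
there exists `ℓ > k` with `B_{ℓj} B_{ℓk} ≠ 0`. -/
theorem precision_support_eq_moral (p : ℕ) (B : Matrix (Fin p) (Fin p) ℝ)
    (hB : ∀ i j : Fin p, i ≤ j → B i j = 0)
    (σsq : Fin p → ℝ) (hσ : ∀ i, 0 < σsq i)
    (Ω : Matrix (Fin p) (Fin p) ℝ)
    (hΩ : Ω = (1 - B)ᵀ * Matrix.diagonal (fun i => (σsq i)⁻¹) * (1 - B))
    (hnc : ∀ j k : Fin p, j < k → Ω k j = 0 →
      B k j = 0 ∧ ∀ ℓ : Fin p, k < ℓ → B ℓ j * B ℓ k = 0) :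
    ∀ j k : Fin p, j < k →
      (Ω k j ≠ 0 ↔ B k j ≠ 0 ∨ ∃ ℓ : Fin p, k < ℓ ∧ B ℓ j * B ℓ k ≠ 0) := by
  intro j k hjk
  constructor
  · intro hne
    by_contra hcon
    push_neg at hcon
    obtain ⟨h1, h2⟩ := hcon
    apply hne
    subst hΩ
    rw [Matrix.mul_apply]
    apply Finset.sum_eq_zero
    intro i _
    rw [Matrix.mul_diagonal, Matrix.transpose_apply]
    rcases lt_trichotomy i k with hik | hik | hik
    · have : (1 - B) i k = 0 := by
        simp [Matrix.sub_apply, Matrix.one_apply, hik.ne, hB i k hik.le]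
      rw [this]; ring
    · subst hik
      have h0 : (1 - B) i j = 0 := by
        simp [Matrix.sub_apply, Matrix.one_apply, hjk.ne', h1]
      rw [h0]; ring
    · have hb1 : (1 - B) i k = -B i k := by
        simp [Matrix.sub_apply, Matrix.one_apply, hik.ne']
      have hb2 : (1 - B) i j = -B i j := by
        simp [Matrix.sub_apply, Matrix.one_apply, (hjk.trans hik).ne']
      have : -B i k * (σsq i)⁻¹ * -B i j = (σsq i)⁻¹ * (B i j * B i k) := by ring
      rw [hb1, hb2, this, h2 i hik, mul_zero]
  · intro h hzero
    obtain ⟨h1, h2⟩ := hnc j k hjk hzero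
    rcases h with h | ⟨ℓ, hℓ, hne⟩
    · exact h h1
    · exact hne (h2 ℓ hℓ)
end

section
/- Uniqueness of the Cholesky pattern under a topological ordering: let B be strictly lower-triangular, D = diag(σ_i²) positive, and Ω = (I−B)^T D^{-1} (I−B). Let L be the (unique) lower-triangular Cholesky factor of the reverse-order conjugate Ω_rev = J Ω J, where J is the reversal permutation matrix (J_{ij} = 1 iff j = p+1−i). Then L = J (I−B)^T D^{-1/2} J, so the strictly-lower-triangular support of L equals the reversed support of B^T; in particular ‖L‖₀ = p + ‖B‖₀. -/
open Matrix

/-- Uniqueness of the Cholesky pattern under a (reverse) topological ordering: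
any lower-triangular factor `L` with positive diagonal of `Ω_rev = J Ω J`
(with `J` the reversal permutation matrix) equals `J (I−B)ᵀ D^{-1/2} J`, and its
number of nonzeros equals `p + ‖B‖₀`. -/
theorem cholesky_pattern_reverse_order (p : ℕ) (B : Matrix (Fin p) (Fin p) ℝ)
    (hB : ∀ i j : Fin p, i ≤ j → B i j = 0)
    (σ : Fin p → ℝ) (hσ : ∀ i, 0 < σ i)
    (Ω J L : Matrix (Fin p) (Fin p) ℝ)
    (hΩ : Ω = (1 - B)ᵀ * Matrix.diagonal (fun i => (σ i ^ 2)⁻¹) * (1 - B))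
    (hJ : ∀ i j : Fin p, J i j = if j = i.rev then 1 else 0)
    (hlt : ∀ i j : Fin p, i < j → L i j = 0)
    (hdiag : ∀ i, 0 < L i i)
    (hfact : J * Ω * J = L * Lᵀ) :
    L = J * (1 - B)ᵀ * Matrix.diagonal (fun i => (σ i)⁻¹) * J ∧
    {q : Fin p × Fin p | L q.1 q.2 ≠ 0}.ncard
      = p + {q : Fin p × Fin p | B q.1 q.2 ≠ 0}.ncard := by
  set D : Matrix (Fin p) (Fin p) ℝ := Matrix.diagonal (fun i => (σ i)⁻¹) with hD
  set M : Matrix (Fin p) (Fin p) ℝ := J * (1 - B)ᵀ * D * J with hM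
  -- entry lemmas for J
  have hJl : ∀ (X : Matrix (Fin p) (Fin p) ℝ) (i j : Fin p), (J * X) i j = X i.rev j := by
    intro X i j
    simp [Matrix.mul_apply, hJ]
  have hJr : ∀ (X : Matrix (Fin p) (Fin p) ℝ) (i j : Fin p), (X * J) i j = X i j.rev := by
    intro X i j
    rw [Matrix.mul_apply, Finset.sum_eq_single j.rev]
    · simp [hJ, Fin.rev_rev]
    · intro k _ hk
      rw [hJ]
      have : ¬ (j = k.rev) := by
        intro h; apply hk; rw [h, Fin.rev_rev]
      simp [this]
    · simp
  -- entries of M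
  have hMe : ∀ i j : Fin p, M i j =
      ((if i = j then (1:ℝ) else 0) - B j.rev i.rev) * (σ j.rev)⁻¹ := by
    intro i j
    rw [hM, hJr, mul_assoc, hJl, hD, Matrix.mul_diagonal, Matrix.transpose_apply,
      Matrix.sub_apply, Matrix.one_apply]
    by_cases h : i = j
    · simp [h]
    · have h' : ¬ (j.rev = i.rev) := fun hh => h (Fin.rev_inj.mp hh).symm
      simp [h, h']
  have hMlt : ∀ i j : Fin p, i < j → M i j = 0 := by
    intro i j hij
    rw [hMe, hB j.rev i.rev (le_of_lt (by rwa [Fin.rev_lt_rev]))]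
    simp [Fin.ne_of_lt hij]
  have hMd : ∀ i : Fin p, M i i = (σ i.rev)⁻¹ := by
    intro i
    rw [hMe, hB i.rev i.rev le_rfl]
    simp
  have hMdpos : ∀ i : Fin p, 0 < M i i := fun i => by
    rw [hMd]; exact inv_pos.mpr (hσ _)
  -- J is symmetric and involutive
  have hJt : Jᵀ = J := by
    ext i j
    rw [Matrix.transpose_apply, hJ, hJ]
    by_cases h : i = j.rev
    · simp [h, Fin.rev_rev]
    · have h' : ¬ (j = i.rev) := by
        intro hh; apply h; rw [hh, Fin.rev_rev]
      simp [h, h']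
  have hJJ : J * J = 1 := by
    ext i j
    rw [hJl, hJ, Matrix.one_apply]
    simp [Fin.rev_rev, eq_comm]
  -- M Mᵀ = J Ω J
  have hMM : M * Mᵀ = J * Ω * J := by
    have hDt : Dᵀ = D := Matrix.diagonal_transpose _
    have hDD : D * D = Matrix.diagonal (fun i => (σ i ^ 2)⁻¹) := by
      have hfun : (fun i => (σ i)⁻¹ * (σ i)⁻¹) = fun i => (σ i ^ 2)⁻¹ := by
        funext i; rw [← mul_inv, ← sq]
      rw [hD, Matrix.diagonal_mul_diagonal, hfun]
    calc M * Mᵀ = J * (1 - B)ᵀ * D * (J * J) * D * (1 - B) * J := by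
          rw [hM]
          simp only [Matrix.transpose_mul, Matrix.transpose_transpose, hJt, hDt]
          simp only [mul_assoc]
      _ = J * ((1 - B)ᵀ * (D * D) * (1 - B)) * J := by
          rw [hJJ]
          simp only [mul_one, mul_assoc]
      _ = J * Ω * J := by rw [hDD, ← hΩ]
  -- M is invertible
  have hMbt : M.BlockTriangular (OrderDual.toDual) := fun i j h => hMlt i j h
  have hLbt : L.BlockTriangular (OrderDual.toDual) := fun i j h => hlt i j h
  have hMdet : IsUnit M.det := by
    rw [Matrix.det_of_lowerTriangular M hMbt]
    refine isUnit_iff_ne_zero.mpr (Finset.prod_ne_zero_iff.mpr fun i _ => ?_)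
    exact ne_of_gt (hMdpos i)
  haveI : Invertible M := M.invertibleOfIsUnitDet hMdet
  -- orthogonal factor
  set Q : Matrix (Fin p) (Fin p) ℝ := M⁻¹ * L with hQ
  have hLL : L * Lᵀ = M * Mᵀ := by rw [← hfact, hMM]
  have hQQ : Q * Qᵀ = 1 := by
    rw [hQ, Matrix.transpose_mul, Matrix.transpose_nonsing_inv]
    have e1 : M⁻¹ * L * (Lᵀ * Mᵀ⁻¹) = M⁻¹ * (L * Lᵀ * Mᵀ⁻¹) := by
      simp only [mul_assoc]
    rw [e1, hLL]
    have e2 : M * Mᵀ * Mᵀ⁻¹ = M := by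
      rw [mul_assoc, Matrix.mul_nonsing_inv Mᵀ (by rwa [Matrix.det_transpose]), mul_one]
    rw [e2, Matrix.nonsing_inv_mul M hMdet]
  have hQbt : Q.BlockTriangular (OrderDual.toDual) :=
    (Matrix.blockTriangular_inv_of_blockTriangular hMbt).mul hLbt
  haveI : Invertible Q := invertibleOfRightInverse Q Qᵀ hQQ
  have hQinv : Q⁻¹ = Qᵀ := Matrix.inv_eq_right_inv hQQ
  have hQibt : (Q⁻¹).BlockTriangular (OrderDual.toDual) :=
    Matrix.blockTriangular_inv_of_blockTriangular hQbt
  have hQod : ∀ i j : Fin p, i ≠ j → Q i j = 0 := by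
    intro i j hij
    rcases lt_or_gt_of_ne hij with h | h
    · exact hQbt h
    · have h0 : Q⁻¹ j i = 0 := hQibt h
      rw [hQinv, Matrix.transpose_apply] at h0
      exact h0
  have hLMQ : L = M * Q := by
    rw [hQ, ← mul_assoc, Matrix.mul_nonsing_inv M hMdet, one_mul]
  have hQd : ∀ i : Fin p, Q i i = 1 := by
    intro i
    have h1 : L i i = M i i * Q i i := by
      rw [hLMQ, Matrix.mul_apply, Finset.sum_eq_single i]
      · intro k _ hk; rw [hQod k i hk, mul_zero]
      · simp
    have h2 : Q i i * Q i i = 1 := by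
      have := congrArg (fun X => X i i) hQQ
      simp only [Matrix.mul_apply, Matrix.one_apply_eq, Matrix.transpose_apply] at this
      rwa [Finset.sum_eq_single i (fun k _ hk => by rw [hQod i k (Ne.symm hk), zero_mul])
        (by simp)] at this
    have hQpos : 0 < Q i i := by
      by_contra h
      push_neg at h
      have := mul_nonpos_of_nonneg_of_nonpos (le_of_lt (hMdpos i)) h
      rw [← h1] at this
      exact absurd this (not_le.mpr (hdiag i))
    nlinarith
  have hLeqM : L = M := by
    ext i j
    rw [hLMQ, Matrix.mul_apply, Finset.sum_eq_single j]
    · rw [hQd, mul_one]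
    · intro k _ hk; rw [hQod k j hk, mul_zero]
    · simp
  refine ⟨hLeqM, ?_⟩
  -- counting part
  have hsupp : {q : Fin p × Fin p | L q.1 q.2 ≠ 0} =
      {q : Fin p × Fin p | q.1 = q.2} ∪
        ((fun q : Fin p × Fin p => (q.2.rev, q.1.rev)) '' {q | B q.1 q.2 ≠ 0}) := by
    ext ⟨i, j⟩
    simp only [Set.mem_setOf_eq, Set.mem_union, Set.mem_image, hLeqM, Prod.exists, Prod.mk.injEq]
    rw [hMe]
    constructor
    · intro h
      by_cases hij : i = j
      · exact Or.inl hij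
      · right
        refine ⟨j.rev, i.rev, ?_, Fin.rev_rev _, Fin.rev_rev _⟩
        intro hb
        apply h
        simp [hij, hb]
    · rintro (h | ⟨a, b, hab, hb, ha⟩)
      · subst h
        rw [hB i.rev i.rev le_rfl]
        simp [ne_of_gt (hσ i.rev)]
      · subst hb; subst ha
        rw [Fin.rev_rev, Fin.rev_rev]
        have hba : b < a := by
          by_contra h
          exact hab (hB a b (le_of_not_gt h))
        have hij : ¬ (b.rev = a.rev) := by
          rw [Fin.rev_inj]; exact ne_of_lt hba
        simp [hij, hab, ne_of_gt (hσ a)]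
  rw [hsupp, Set.ncard_union_eq]
  · congr 1
    · have : {q : Fin p × Fin p | q.1 = q.2} = Set.range (fun i : Fin p => (i, i)) := by
        ext ⟨i, j⟩
        simp only [Set.mem_setOf_eq, Set.mem_range, Prod.mk.injEq]
        constructor
        · intro h; exact ⟨i, rfl, h⟩
        · rintro ⟨a, rfl, rfl⟩; rfl
      rw [this, ← Set.image_univ, Set.ncard_image_of_injective _ (fun a b h => (Prod.mk.injEq _ _ _ _ ▸ h).1),
        Set.ncard_univ, Nat.card_eq_fintype_card, Fintype.card_fin]
    · exact Set.ncard_image_of_injective _ (fun a b h => by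
        obtain ⟨h1, h2⟩ := Prod.mk.injEq _ _ _ _ ▸ h
        exact Prod.ext (Fin.rev_injective h2) (Fin.rev_injective h1))
  · rw [Set.disjoint_left]
    rintro ⟨i, j⟩ hd ⟨⟨a, b⟩, hab, hq⟩
    simp only [Prod.mk.injEq] at hq
    obtain ⟨hb, ha⟩ := hq
    have hba : b < a := by
      by_contra h
      exact hab (hB a b (le_of_not_gt h))
    rw [Set.mem_setOf_eq] at hd
    rw [← hb, ← ha, Fin.rev_inj] at hd
    exact absurd hd (ne_of_lt hba)
end

section
/- If the reversal-conjugated precision Ω_rev = JΩJ of Ω = (I−B)^T D^{-1}(I−B) has Cholesky factor L (as in the zero-fill case), then the induced directed edge set of the reversal permutation with factor L equals exactly the edge set of the DAG encoded by B: (j,k) with j < k and B_{kj} ≠ 0 correspond bijectively to strictly lower-triangular nonzeros of L. -/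
open Matrix

/-- Key entrywise identity extracted from equality of Gram products. -/
lemma chol_key (p : ℕ) (L M : Matrix (Fin p) (Fin p) ℝ)
    (hLlt : ∀ i j : Fin p, i < j → L i j = 0)
    (hMlt : ∀ i j : Fin p, i < j → M i j = 0)
    (h : L * Lᵀ = M * Mᵀ)
    (i j : Fin p) (IH : ∀ j' : Fin p, j' < j → ∀ i', L i' j' = M i' j') :
    L i j * L j j = M i j * M j j := by
  have h1 : ∀ k : Fin p, k ∈ Finset.univ → k ≠ j →
      L i k * L j k - M i k * M j k = 0 := by
    intro k _ hk
    rcases lt_or_gt_of_ne hk with hkj | hkj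
    · rw [IH k hkj i, IH k hkj j]; ring
    · rw [hLlt j k hkj, hMlt j k hkj]; ring
  have h2 : (∑ k : Fin p, (L i k * L j k - M i k * M j k))
      = L i j * L j j - M i j * M j j :=
    Finset.sum_eq_single j h1 (by simp)
  have h3 : (∑ k : Fin p, (L i k * L j k - M i k * M j k)) = 0 := by
    rw [Finset.sum_sub_distrib]
    have := congrFun (congrFun h i) j
    simp only [mul_apply, transpose_apply] at this
    rw [this]; ring
  rw [h3] at h2
  linarith

/-- Uniqueness of the Cholesky factor: two lower-triangular matrices with
positive diagonals and equal Gram products are equal. -/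
lemma chol_unique (p : ℕ) (L M : Matrix (Fin p) (Fin p) ℝ)
    (hLlt : ∀ i j : Fin p, i < j → L i j = 0) (hLd : ∀ i, 0 < L i i)
    (hMlt : ∀ i j : Fin p, i < j → M i j = 0) (hMd : ∀ i, 0 < M i i)
    (h : L * Lᵀ = M * Mᵀ) : L = M := by
  have main : ∀ n : ℕ, ∀ j : Fin p, (j : ℕ) = n → ∀ i, L i j = M i j := by
    intro n
    induction n using Nat.strong_induction_on with
    | _ n IHn =>
      intro j hj i
      have IH : ∀ j' : Fin p, j' < j → ∀ i', L i' j' = M i' j' := by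
        intro j' hj' i'
        exact IHn (j' : ℕ) (hj ▸ hj') j' rfl i'
      have hd : L j j = M j j := by
        have hk := chol_key p L M hLlt hMlt h j j IH
        nlinarith [hLd j, hMd j]
      rcases lt_or_ge i j with hij | hij
      · rw [hLlt i j hij, hMlt i j hij]
      · have hk := chol_key p L M hLlt hMlt h i j IH
        rw [hd] at hk
        exact mul_right_cancel₀ (ne_of_gt (hMd j)) hk
  ext i j
  exact main (j : ℕ) j rfl i

/-- The induced directed edge set of the reversal ordering with the Cholesky
factor `L` of `Ω_rev = J Ω J` equals exactly the edge set of the DAG encoded by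
`B`: the pairs `(rev a, rev b)` with `a < b` and `L_{ba} ≠ 0` are exactly the
pairs `(k, j)` with `j < k` and `B_{kj} ≠ 0`. -/
theorem reverse_order_edges_eq_dag_edges (p : ℕ) (B : Matrix (Fin p) (Fin p) ℝ)
    (hB : ∀ i j : Fin p, i ≤ j → B i j = 0)
    (σ : Fin p → ℝ) (hσ : ∀ i, 0 < σ i)
    (Ω J L : Matrix (Fin p) (Fin p) ℝ)
    (hΩ : Ω = (1 - B)ᵀ * Matrix.diagonal (fun i => (σ i ^ 2)⁻¹) * (1 - B))
    (hJ : ∀ i j : Fin p, J i j = if j = i.rev then 1 else 0)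
    (hlt : ∀ i j : Fin p, i < j → L i j = 0)
    (hdiag : ∀ i, 0 < L i i)
    (hfact : J * Ω * J = L * Lᵀ) :
    {e : Fin p × Fin p | ∃ a b : Fin p, a < b ∧ L b a ≠ 0 ∧ e = (a.rev, b.rev)}
      = {e : Fin p × Fin p | e.2 < e.1 ∧ B e.1 e.2 ≠ 0} := by
  -- the explicit factor
  set A : Matrix (Fin p) (Fin p) ℝ :=
    (1 - B)ᵀ * Matrix.diagonal (fun i => (σ i)⁻¹) with hA
  set M : Matrix (Fin p) (Fin p) ℝ := J * A * J with hM
  -- J acts by reversing indices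
  have hJA : ∀ (X : Matrix (Fin p) (Fin p) ℝ) (i k : Fin p),
      (J * X) i k = X i.rev k := by
    intro X i k
    rw [mul_apply]
    rw [Finset.sum_eq_single i.rev (by intro b _ hb; rw [hJ]; simp [hb]) (by simp)]
    rw [hJ]; simp
  have hXJ : ∀ (X : Matrix (Fin p) (Fin p) ℝ) (i k : Fin p),
      (X * J) i k = X i k.rev := by
    intro X i k
    rw [mul_apply]
    rw [Finset.sum_eq_single k.rev
      (by
        intro b _ hb
        rw [hJ]
        have hnb : ¬ k = b.rev := fun h => hb (by rw [h, Fin.rev_rev])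
        simp [hnb])
      (by simp)]
    rw [hJ]; simp [Fin.rev_rev]
  -- entries of A and M
  have hAapp : ∀ x y : Fin p, A x y = (1 - B) y x * (σ y)⁻¹ := by
    intro x y
    rw [hA, mul_diagonal, transpose_apply]
  have hMapp : ∀ i k : Fin p, M i k = (1 - B) k.rev i.rev * (σ k.rev)⁻¹ := by
    intro i k
    rw [hM, hXJ, hJA, hAapp]
  have hone : ∀ x y : Fin p, (1 - B) x y = (if x = y then (1:ℝ) else 0) - B x y := by
    intro x y
    simp [Matrix.sub_apply, Matrix.one_apply]
  -- M is lower triangular with positive diagonal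
  have hMlt : ∀ i j : Fin p, i < j → M i j = 0 := by
    intro i j hij
    have hr : j.rev < i.rev := Fin.rev_lt_rev.mpr hij
    rw [hMapp, hone, hB j.rev i.rev (le_of_lt hr), if_neg (ne_of_lt hr)]
    ring
  have hMd : ∀ i : Fin p, 0 < M i i := by
    intro i
    rw [hMapp, hone, hB i.rev i.rev le_rfl]
    simp [inv_pos.mpr (hσ i.rev)]
  -- M * Mᵀ = J * Ω * J
  have hMMT : M * Mᵀ = J * Ω * J := by
    have hJJ : J * J = 1 := by
      ext i j
      rw [hJA, hJ, Matrix.one_apply, Fin.rev_rev]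
      by_cases h : i = j
      · simp [h]
      · rw [if_neg (fun hh => h hh.symm), if_neg h]
    have hAAT : A * Aᵀ = Ω := by
      have hdd : (fun i => (σ i)⁻¹ * (σ i)⁻¹) = (fun i => (σ i ^ 2)⁻¹) := by
        funext i; rw [← mul_inv, ← sq]
      rw [hA, hΩ, Matrix.transpose_mul, Matrix.diagonal_transpose,
        Matrix.transpose_transpose,
        Matrix.mul_assoc ((1 - B)ᵀ) (Matrix.diagonal fun i => (σ i)⁻¹),
        ← Matrix.mul_assoc (Matrix.diagonal fun i => (σ i)⁻¹)
          (Matrix.diagonal fun i => (σ i)⁻¹) (1 - B),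
        Matrix.diagonal_mul_diagonal, hdd, ← Matrix.mul_assoc]
    have hJT : Jᵀ = J := by
      ext i j
      rw [transpose_apply, hJ, hJ]
      by_cases h : j = i.rev
      · rw [if_pos h, if_pos (by rw [h, Fin.rev_rev])]
      · rw [if_neg h, if_neg (fun hh => h (by rw [hh, Fin.rev_rev]))]
    have hMT : Mᵀ = J * Aᵀ * J := by
      rw [hM, Matrix.transpose_mul, Matrix.transpose_mul, hJT, Matrix.mul_assoc]
    rw [hM, hMT, ← hAAT]
    simp only [← Matrix.mul_assoc]
    rw [Matrix.mul_assoc (J * A) J J, hJJ, Matrix.mul_one, Matrix.mul_assoc J A Aᵀ]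
  -- uniqueness ⇒ L = M
  have hLM : L = M :=
    chol_unique p L M hlt hdiag hMlt hMd (by rw [← hfact, hMMT])
  -- the characterization of the entries of L below the diagonal
  have hLba : ∀ a b : Fin p, a < b → (L b a ≠ 0 ↔ B a.rev b.rev ≠ 0) := by
    intro a b hab
    rw [hLM, hMapp, hone]
    have hne : ¬ a.rev = b.rev := fun hh =>
      absurd (Fin.rev_injective hh) (ne_of_lt hab)
    rw [if_neg hne]
    constructor
    · intro h hB0; apply h; rw [hB0]; ring
    · intro h h0
      apply h
      have hσne : (σ a.rev)⁻¹ ≠ 0 := ne_of_gt (inv_pos.mpr (hσ a.rev))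
      have := mul_eq_zero.mp h0
      rcases this with h1 | h1
      · linarith [h1]
      · exact absurd h1 hσne
  ext e
  simp only [Set.mem_setOf_eq]
  constructor
  · rintro ⟨a, b, hab, hL, rfl⟩
    refine ⟨Fin.rev_lt_rev.mpr hab, ?_⟩
    exact (hLba a b hab).mp hL
  · rintro ⟨hlt', hBne⟩
    refine ⟨e.1.rev, e.2.rev, Fin.rev_lt_rev.mpr hlt', ?_, ?_⟩
    · rw [(hLba e.1.rev e.2.rev (Fin.rev_lt_rev.mpr hlt'))]
      simpa [Fin.rev_rev] using hBne
    · simp [Fin.rev_rev]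
end
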